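/- Let A be an abelian group and H a regular subgroup of Hol(A) = A ⋊ Aut(A). Then the first projection π₁ restricted to H is a bijection onto A, and defining a·b := a + π₂((π₁|_H)⁻¹(a))(b) makes A into a left brace whose multiplicative group is isomorphic to H. -/

import Mathlib

/-- The multiplicative group structure on `AddAut A` that Mathlib provided in 2024
(composition `g * h = h.trans g`); current Mathlib only gives `AddAut A` an additive group. -/
instance addAutGroupOld (A : Type*) [Add A] : Group (AddAut A) where
  mul g h := AddEquiv.trans h g
  one := AddEquiv.refl _
  inv := AddEquiv.symm
  mul_assoc _ _ _ := rfl
  one_mul _ := rfl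
  mul_one _ := rfl
  inv_mul_cancel := AddEquiv.self_trans_symm

def holAction (A : Type*) [AddCommGroup A] : AddAut A →* MulAut (Multiplicative A) where
  toFun f := AddEquiv.toMultiplicative f
  map_one' := rfl
  map_mul' _ _ := rfl

/-- The holomorph `Hol(A) = A ⋊ Aut(A)` of an additive abelian group `A`. -/
abbrev Hol (A : Type*) [AddCommGroup A] :=
  SemidirectProduct (Multiplicative A) (AddAut A) (holAction A)

/-!
`Hol A` acts on `A` by `x • w = π₁ x + π₂ x w`, and `π₁ x = x • 0`. Regularity of `H` makes
`x ↦ x • 0` a bijection `H ≃ A`; the brace product is the group law of `H` transported along it,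
because `π₁ (x * y) = π₁ x + π₂ x (π₁ y)`. Additivity of `π₂ x` then gives the brace axiom.
-/

theorem Subgroup.bijective_smul_of_existsUnique_smul_eq {G X : Type*} [Group G] [MulAction G X]
    (H : Subgroup G) (x₀ : X) (hreg : ∀ w : X, ∃! g : G, g ∈ H ∧ g • w = x₀) :
    Function.Bijective (fun g : H => (g : G) • x₀) := by
  constructor
  · intro g h hgh
    have hstab : ((h⁻¹ * g : H) : G) • x₀ = x₀ := by
      simp only [coe_mul, coe_inv, mul_smul, hgh, inv_smul_smul]
    obtain ⟨_, _, huniq⟩ := hreg x₀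
    have : ((h⁻¹ * g : H) : G) = 1 :=
      (huniq _ ⟨(h⁻¹ * g).2, hstab⟩).trans (huniq _ ⟨H.one_mem, one_smul G x₀⟩).symm
    exact (inv_mul_eq_one.mp (Subtype.ext this)).symm
  · intro w
    obtain ⟨g, ⟨hg, hgw⟩, _⟩ := hreg w
    exact ⟨⟨g⁻¹, H.inv_mem hg⟩, inv_smul_eq_iff.mpr hgw.symm⟩

namespace Hol

variable {A : Type*} [AddCommGroup A]

theorem toAdd_mul_left (x y : Hol A) :
    Multiplicative.toAdd (x * y).left
      = Multiplicative.toAdd x.left + x.right (Multiplicative.toAdd y.left) := rfl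

instance : MulAction (Hol A) A where
  smul x w := Multiplicative.toAdd x.left + x.right w
  one_smul _ := zero_add _
  mul_smul x y w := by
    change Multiplicative.toAdd (x * y).left + x.right (y.right w)
      = Multiplicative.toAdd x.left + x.right (Multiplicative.toAdd y.left + y.right w)
    rw [toAdd_mul_left, map_add, add_assoc]

theorem smul_def (x : Hol A) (w : A) : x • w = Multiplicative.toAdd x.left + x.right w := rfl

theorem smul_zero_eq_toAdd_left (x : Hol A) : x • (0 : A) = Multiplicative.toAdd x.left := by
  rw [smul_def, map_zero, add_zero]

end Hol

/-- If `H` is a regular subgroup of `Hol(A)`, then `π₁` restricted to `H` is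
a bijection onto `A`, and the product `a·b := a + π₂((π₁|_H)⁻¹(a))(b)` makes `A` into a
left brace whose multiplicative group is isomorphic to `H`. -/
theorem stmt3 (A : Type*) [AddCommGroup A] (H : Subgroup (Hol A))
    (hreg : ∀ w : A, ∃! x : Hol A, x ∈ H ∧ Multiplicative.toAdd x.left + x.right w = 0) :
    Function.Bijective (fun x : H => Multiplicative.toAdd (x : Hol A).left) ∧
    ∃ mul : A → A → A,
      -- `mul` is the product `a·b = a + π₂((π₁|_H)⁻¹(a))(b)`:
      (∀ (a b : A) (x : H), Multiplicative.toAdd (x : Hol A).left = a →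
        mul a b = a + (x : Hol A).right b) ∧
      -- the left brace axiom `a·(b+c) + a = a·b + a·c`:
      (∀ a b c : A, mul a (b + c) + a = mul a b + mul a c) ∧
      -- `(A, mul)` is a group isomorphic to `H` (via a multiplicative bijection onto `H`):
      ∃ e : A ≃ H, ∀ a b : A, e (mul a b) = e a * e b := by
  have hbij : Function.Bijective (fun x : H => Multiplicative.toAdd (x : Hol A).left) := by
    simpa only [Hol.smul_zero_eq_toAdd_left] using H.bijective_smul_of_existsUnique_smul_eq 0 hreg
  set π₁ : H ≃ A := Equiv.ofBijective _ hbij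
  have hmul (x : H) (b : A) : π₁ (x * π₁.symm b) = π₁ x + (x : Hol A).right b := by
    conv_rhs => rw [← π₁.apply_symm_apply b]
    exact Hol.toAdd_mul_left _ _
  refine ⟨hbij, fun a b => π₁ (π₁.symm a * π₁.symm b), fun a b x hx => ?_, fun a b c => ?_,
    π₁.symm, fun a b => π₁.symm_apply_apply _⟩
  · show π₁ (π₁.symm a * π₁.symm b) = _
    rw [π₁.symm_apply_eq.mpr hx.symm, hmul]
    exact congrArg (· + _) hx
  · simp only [hmul, map_add, π₁.apply_symm_apply]
    abel
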